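/- For every j ≥ 1 and all η_1, …, η_j ∈ ℂ^V, the forward Born operator satisfies ‖K_j(η_1, …, η_j)‖_{ℓ^p(R×S)} ≤ ν_p · μ_p^{j−1} · ‖η_1‖_{ℓ^p} ⋯ ‖η_j‖_{ℓ^p}. -/

import Mathlib

open scoped ENNReal

/-- The ℓ^p norm of a finitely indexed family, `p ∈ [1, ∞]`. -/
noncomputable def lpNorm (p : ℝ≥0∞) {ι E : Type*} [Fintype ι] [SeminormedAddCommGroup E]
    (f : ι → E) : ℝ :=
  if p = ∞ then ⨆ i, ‖f i‖ else (∑ i, ‖f i‖ ^ p.toReal) ^ (1 / p.toReal)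

variable {V R S : Type*} [Fintype V] [DecidableEq V] [Fintype R] [Fintype S]

/-- The multilinear forward Born operator: `bornK α0 B G C j` is `K_j`, mapping
`(η_1, …, η_j)` (given as the first `j` values of an `ℕ`-indexed family) to
`(r, s) ↦ (−α0)^j (B D_{η_1} G D_{η_2} G ⋯ G D_{η_j} C)(r, s)`; `K_0 := 0` is junk. -/
noncomputable def bornK (α0 : ℝ) (B : Matrix R V ℂ) (G : Matrix V V ℂ) (C : Matrix V S ℂ) :
    ℕ → (ℕ → V → ℂ) → R × S → ℂ
  | 0, _ => 0
  | j + 1, η => fun rs =>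
      (-(α0 : ℂ)) ^ (j + 1) *
        (B * Matrix.diagonal (η 0) *
          (List.ofFn fun i : Fin j => G * Matrix.diagonal (η (i.1 + 1))).prod * C) rs.1 rs.2

/-- `μ_p = α0 · max_{v ∈ V} ‖row v of G‖_{ℓ^q}` (this depends only on `q`). -/
noncomputable def muConst (α0 : ℝ) (q : ℝ≥0∞) (G : Matrix V V ℂ) : ℝ :=
  α0 * ⨆ v : V, lpNorm q (G v)

/-- `ν_p = α0 · (Σ_{r ∈ R} ‖row r of B‖_q^p)^{1/p} · (Σ_{s ∈ S} ‖column s of C‖_q^p)^{1/p}`,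
with maxima replacing sums when `p = ∞`. -/
noncomputable def nuConst (α0 : ℝ) (p q : ℝ≥0∞) (B : Matrix R V ℂ) (C : Matrix V S ℂ) : ℝ :=
  α0 * lpNorm p (fun r : R => lpNorm q (B r)) * lpNorm p (fun s : S => lpNorm q fun v => C v s)

/-- `C_p = min_{‖η‖_p = 1} ‖K_1 η‖_p`. -/
noncomputable def CpConst (p : ℝ≥0∞) (α0 : ℝ) (B : Matrix R V ℂ) (G : Matrix V V ℂ)
    (C : Matrix V S ℂ) : ℝ :=
  sInf {t : ℝ | ∃ η : V → ℂ, lpNorm p η = 1 ∧ t = lpNorm p (bornK α0 B G C 1 fun _ => η)}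

/-!
Write `K_j(η) = (−α0)^j B (D_{η_1} G ⋯ G D_{η_j}) C` and follow one column `C e_s` through the
chain from the right. Multiplying by a diagonal `D_η` turns a sup bound into an `ℓ^p` bound,
`‖D_η y‖_p ≤ ‖η‖_p ‖y‖_∞`, while Hölder's inequality applied row by row turns an `ℓ^p` bound
back into a sup bound, `‖G x‖_∞ ≤ (max_v ‖G_v‖_q) ‖x‖_p`. Starting from `‖C e_s‖_∞ ≤ ‖C e_s‖_q`,
each factor `G D_η` costs `μ_p/α0 · ‖η‖_p`; a last Hölder step against the row `B_r` bounds the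
entry `(r, s)` by a product `u_r w_s`, and the `ℓ^p` norm of such a product on `R × S` is at most
`‖u‖_p ‖w‖_p`.
-/

section LpNorm

variable {ι κ E F 𝕜 : Type*} [Fintype ι] [Fintype κ]
  [SeminormedAddCommGroup E] [SeminormedAddCommGroup F] [SeminormedRing 𝕜] {p q : ℝ≥0∞}

lemma norm_le_iSup_norm (f : ι → E) (i : ι) : ‖f i‖ ≤ ⨆ i, ‖f i‖ :=
  le_ciSup (Finite.bddAbove_range fun i => ‖f i‖) i

lemma lpNorm_top (f : ι → E) : lpNorm ∞ f = ⨆ i, ‖f i‖ := if_pos rfl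

lemma lpNorm_of_ne_top (hp : p ≠ ∞) (f : ι → E) :
    lpNorm p f = (∑ i, ‖f i‖ ^ p.toReal) ^ (1 / p.toReal) :=
  if_neg hp

lemma lpNorm_one (f : ι → E) : lpNorm 1 f = ∑ i, ‖f i‖ := by
  simp [lpNorm_of_ne_top]

lemma lpNorm_nonneg (p : ℝ≥0∞) (f : ι → E) : 0 ≤ lpNorm p f := by
  unfold lpNorm
  split_ifs
  · exact Real.iSup_nonneg fun i => norm_nonneg _
  · positivity

lemma norm_le_lpNorm (hp : p ≠ 0) (f : ι → E) (i : ι) : ‖f i‖ ≤ lpNorm p f := by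
  rcases eq_or_ne p ∞ with rfl | hp_top
  · rw [lpNorm_top]
    exact norm_le_iSup_norm f i
  have hp_pos : 0 < p.toReal := ENNReal.toReal_pos hp hp_top
  rw [lpNorm_of_ne_top hp_top]
  calc ‖f i‖ = (‖f i‖ ^ p.toReal) ^ (1 / p.toReal) := by
        rw [one_div, Real.rpow_rpow_inv (norm_nonneg _) hp_pos.ne']
    _ ≤ (∑ i, ‖f i‖ ^ p.toReal) ^ (1 / p.toReal) := by
        gcongr
        exact Finset.single_le_sum (f := fun i => ‖f i‖ ^ p.toReal) (fun i _ => by positivity)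
          (Finset.mem_univ i)

lemma lpNorm_le_mul_lpNorm_of_norm_le (hp : p ≠ 0) {f : ι → E} {g : ι → F} {c : ℝ}
    (hc : 0 ≤ c) (h : ∀ i, ‖f i‖ ≤ c * ‖g i‖) : lpNorm p f ≤ c * lpNorm p g := by
  rcases eq_or_ne p ∞ with rfl | hp_top
  · rw [lpNorm_top, lpNorm_top]
    refine Real.iSup_le (fun i => (h i).trans ?_) (mul_nonneg hc (lpNorm_nonneg ∞ g))
    gcongr
    exact norm_le_iSup_norm g i
  have hp_pos : 0 < p.toReal := ENNReal.toReal_pos hp hp_top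
  rw [lpNorm_of_ne_top hp_top, lpNorm_of_ne_top hp_top]
  calc (∑ i, ‖f i‖ ^ p.toReal) ^ (1 / p.toReal)
      ≤ (∑ i, c ^ p.toReal * ‖g i‖ ^ p.toReal) ^ (1 / p.toReal) := by
        gcongr with i
        rw [← Real.mul_rpow hc (norm_nonneg _)]
        gcongr
        exact h i
    _ = c * (∑ i, ‖g i‖ ^ p.toReal) ^ (1 / p.toReal) := by
        rw [← Finset.mul_sum, Real.mul_rpow (by positivity) (by positivity), one_div,
          Real.rpow_rpow_inv hc hp_pos.ne']

lemma lpNorm_prod_mul_le (u : ι → 𝕜) (w : κ → 𝕜) :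
    lpNorm p (fun x : ι × κ => u x.1 * w x.2) ≤ lpNorm p u * lpNorm p w := by
  rcases eq_or_ne p ∞ with rfl | hp_top
  · simp only [lpNorm_top]
    refine Real.iSup_le (fun x => (norm_mul_le _ _).trans ?_)
      (mul_nonneg (lpNorm_nonneg ∞ u) (lpNorm_nonneg ∞ w))
    exact mul_le_mul (norm_le_iSup_norm u x.1) (norm_le_iSup_norm w x.2) (norm_nonneg _)
      (lpNorm_nonneg ∞ u)
  simp only [lpNorm_of_ne_top hp_top]
  calc (∑ x : ι × κ, ‖u x.1 * w x.2‖ ^ p.toReal) ^ (1 / p.toReal)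
      ≤ (∑ x : ι × κ, (‖u x.1‖ * ‖w x.2‖) ^ p.toReal) ^ (1 / p.toReal) := by
        gcongr with x
        exact norm_mul_le _ _
    _ = ((∑ i, ‖u i‖ ^ p.toReal) * ∑ k, ‖w k‖ ^ p.toReal) ^ (1 / p.toReal) := by
        simp_rw [Real.mul_rpow (norm_nonneg _) (norm_nonneg _)]
        rw [Fintype.sum_prod_type, Finset.sum_mul_sum]
    _ = _ := Real.mul_rpow (by positivity) (by positivity)

lemma sum_norm_mul_norm_le_lpNorm_top_mul_lpNorm_one (f : ι → E) (g : ι → F) :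
    ∑ i, ‖f i‖ * ‖g i‖ ≤ lpNorm ∞ f * lpNorm 1 g := by
  rw [lpNorm_top, lpNorm_one, Finset.mul_sum]
  gcongr with i
  exact norm_le_iSup_norm f i

lemma sum_norm_mul_norm_le_lpNorm_mul_lpNorm [hpq : p.HolderConjugate q] (f : ι → E)
    (g : ι → F) : ∑ i, ‖f i‖ * ‖g i‖ ≤ lpNorm p f * lpNorm q g := by
  rcases eq_or_ne p ∞ with rfl | hp_top
  · rw [(ENNReal.HolderConjugate.eq_top_iff_eq_one ∞ q).mp rfl]
    exact sum_norm_mul_norm_le_lpNorm_top_mul_lpNorm_one f g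
  rcases eq_or_ne q ∞ with rfl | hq_top
  · rw [(ENNReal.HolderConjugate.eq_top_iff_eq_one ∞ p).mp rfl, mul_comm]
    simp_rw [mul_comm ‖f _‖]
    exact sum_norm_mul_norm_le_lpNorm_top_mul_lpNorm_one g f
  rw [lpNorm_of_ne_top hp_top, lpNorm_of_ne_top hq_top]
  exact Real.inner_le_Lp_mul_Lq_of_nonneg _ (hpq.toReal_of_ne_top hp_top hq_top)
    (fun _ _ => norm_nonneg _) (fun _ _ => norm_nonneg _)

lemma norm_sum_mul_le_lpNorm_mul_lpNorm [p.HolderConjugate q] (f g : ι → 𝕜) :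
    ‖∑ i, f i * g i‖ ≤ lpNorm p f * lpNorm q g :=
  calc ‖∑ i, f i * g i‖ ≤ ∑ i, ‖f i‖ * ‖g i‖ :=
        (norm_sum_le _ _).trans (Finset.sum_le_sum fun _ _ => norm_mul_le _ _)
    _ ≤ lpNorm p f * lpNorm q g := sum_norm_mul_norm_le_lpNorm_mul_lpNorm f g

end LpNorm

section MatrixBounds

open Matrix

variable {m n 𝕜 : Type*} [Fintype n] [SeminormedRing 𝕜] {p q : ℝ≥0∞}

lemma norm_mulVec_apply_le [q.HolderConjugate p] (A : Matrix m n 𝕜) (x : n → 𝕜) (i : m) :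
    ‖(A *ᵥ x) i‖ ≤ lpNorm q (A i) * lpNorm p x :=
  norm_sum_mul_le_lpNorm_mul_lpNorm (A i) x

lemma lpNorm_diagonal_mulVec_le [DecidableEq n] (hp : p ≠ 0) (η x : n → 𝕜) {c : ℝ} (hc : 0 ≤ c)
    (hx : ∀ i, ‖x i‖ ≤ c) : lpNorm p (diagonal η *ᵥ x) ≤ c * lpNorm p η :=
  lpNorm_le_mul_lpNorm_of_norm_le hp hc fun i =>
    calc ‖(diagonal η *ᵥ x) i‖ ≤ ‖η i‖ * ‖x i‖ := by
          rw [mulVec_diagonal]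
          exact norm_mul_le _ _
      _ ≤ c * ‖η i‖ := by
          rw [mul_comm]
          gcongr
          exact hx i

end MatrixBounds

section BornChain

open Matrix

variable {𝕜 : Type*} [SeminormedRing 𝕜] {p q : ℝ≥0∞}

/-- `D_{η_1} G D_{η_2} ⋯ G D_{η_{j+1}}`, the middle factor of `K_{j+1}` (with `η_{i+1}` stored as
`η i`, as in `bornK`). -/
def bornChain (G : Matrix V V 𝕜) (η : ℕ → V → 𝕜) (j : ℕ) : Matrix V V 𝕜 :=
  diagonal (η 0) * (List.ofFn fun i : Fin j => G * diagonal (η (i.1 + 1))).prod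

lemma bornChain_zero (G : Matrix V V 𝕜) (η : ℕ → V → 𝕜) :
    bornChain G η 0 = diagonal (η 0) := by
  simp [bornChain]

lemma bornChain_succ (G : Matrix V V 𝕜) (η : ℕ → V → 𝕜) (j : ℕ) :
    bornChain G η (j + 1) = diagonal (η 0) * G * bornChain G (fun k => η (k + 1)) j := by
  simp only [bornChain, List.ofFn_succ, List.prod_cons, Matrix.mul_assoc]
  rfl

omit [Fintype R] [Fintype S] in
lemma bornK_apply (α0 : ℝ) (B : Matrix R V ℂ) (G : Matrix V V ℂ) (C : Matrix V S ℂ) (j : ℕ)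
    (η : ℕ → V → ℂ) (r : R) (s : S) :
    bornK α0 B G C (j + 1) η (r, s) =
      (-(α0 : ℂ)) ^ (j + 1) * (B * (bornChain G η j * C)) r s := by
  simp only [bornK, bornChain, Matrix.mul_assoc]

lemma lpNorm_bornChain_mulVec_le [p.HolderConjugate q] (G : Matrix V V 𝕜) (η : ℕ → V → 𝕜)
    (j : ℕ) {x : V → 𝕜} {c : ℝ} (hc : 0 ≤ c) (hx : ∀ v, ‖x v‖ ≤ c) :
    lpNorm p (bornChain G η j *ᵥ x) ≤
      c * (⨆ v, lpNorm q (G v)) ^ j * ∏ i ∈ Finset.range (j + 1), lpNorm p (η i) := by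
  have hp : p ≠ 0 := ENNReal.HolderConjugate.ne_zero p q
  set M := ⨆ v, lpNorm q (G v)
  have hM : 0 ≤ M := Real.iSup_nonneg fun v => lpNorm_nonneg q (G v)
  induction j generalizing η with
  | zero =>
    simpa [bornChain_zero] using lpNorm_diagonal_mulVec_le hp (η 0) x hc hx
  | succ j ih =>
    set y := bornChain G (fun k => η (k + 1)) j *ᵥ x
    set bound := c * M ^ j * ∏ i ∈ Finset.range (j + 1), lpNorm p (η (i + 1))
    have hGy (v : V) : ‖(G *ᵥ y) v‖ ≤ M * bound :=
      (norm_mulVec_apply_le G y v).trans <|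
        mul_le_mul (le_ciSup (Finite.bddAbove_range fun v => lpNorm q (G v)) v) (ih _)
          (lpNorm_nonneg p y) hM
    rw [bornChain_succ, ← mulVec_mulVec, ← mulVec_mulVec]
    calc lpNorm p (diagonal (η 0) *ᵥ (G *ᵥ y))
        ≤ M * bound * lpNorm p (η 0) :=
          lpNorm_diagonal_mulVec_le hp (η 0) _ (mul_nonneg hM ((lpNorm_nonneg p y).trans (ih _)))
            hGy
      _ = _ := by
          rw [Finset.prod_range_succ' _ (j + 1)]
          ring

omit [Fintype R] [Fintype S] in
lemma norm_bornK_apply_le [p.HolderConjugate q] {α0 : ℝ} (hα0 : 0 ≤ α0) (B : Matrix R V ℂ)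
    (G : Matrix V V ℂ) (C : Matrix V S ℂ) (j : ℕ) (η : ℕ → V → ℂ) (r : R) (s : S) :
    ‖bornK α0 B G C (j + 1) η (r, s)‖ ≤
      α0 ^ (j + 1) * (⨆ v, lpNorm q (G v)) ^ j * (∏ i ∈ Finset.range (j + 1), lpNorm p (η i)) *
        (lpNorm q (B r) * lpNorm q fun v => C v s) := by
  have hq : q ≠ 0 := ENNReal.HolderConjugate.ne_zero q p
  set column : V → ℂ := fun v => C v s
  have hcolumn := lpNorm_bornChain_mulVec_le (p := p) (q := q) G η j (lpNorm_nonneg q column)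
    (norm_le_lpNorm hq column)
  have hentry : (B * (bornChain G η j * C)) r s = ∑ v, B r v * (bornChain G η j *ᵥ column) v :=
    rfl
  rw [bornK_apply, norm_mul, norm_pow, norm_neg, Complex.norm_real, Real.norm_of_nonneg hα0,
    hentry]
  calc α0 ^ (j + 1) * ‖∑ v, B r v * (bornChain G η j *ᵥ column) v‖
      ≤ α0 ^ (j + 1) * (lpNorm q (B r) * lpNorm p (bornChain G η j *ᵥ column)) := by
        gcongr
        exact norm_sum_mul_le_lpNorm_mul_lpNorm _ _
    _ ≤ α0 ^ (j + 1) * (lpNorm q (B r) * (lpNorm q column * (⨆ v, lpNorm q (G v)) ^ j *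
          ∏ i ∈ Finset.range (j + 1), lpNorm p (η i))) := by
        gcongr
        exact lpNorm_nonneg q (B r)
    _ = _ := by ring

end BornChain

theorem forward_born_bound_general
    (p q : ℝ≥0∞) (hpq : 1 / p + 1 / q = 1)
    (α0 : ℝ) (hα0 : 0 < α0) (B : Matrix R V ℂ) (G : Matrix V V ℂ) (C : Matrix V S ℂ)
    (j : ℕ) (η : ℕ → V → ℂ) :
    lpNorm p (fun rs : R × S => bornK α0 B G C (j + 1) η rs) ≤
      nuConst α0 p q B C * muConst α0 q G ^ j *
        ∏ i ∈ Finset.range (j + 1), lpNorm p (η i) := by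
  have : p.HolderConjugate q := ENNReal.holderConjugate_iff.mpr (by simpa only [one_div] using hpq)
  set rowNorm : R → ℝ := fun r => lpNorm q (B r)
  set columnNorm : S → ℝ := fun s => lpNorm q fun v => C v s
  set c := α0 ^ (j + 1) * (⨆ v, lpNorm q (G v)) ^ j * ∏ i ∈ Finset.range (j + 1), lpNorm p (η i)
  have hc : 0 ≤ c := mul_nonneg (mul_nonneg (pow_nonneg hα0.le _)
    (pow_nonneg (Real.iSup_nonneg fun v => lpNorm_nonneg q (G v)) _))
    (Finset.prod_nonneg fun i _ => lpNorm_nonneg p (η i))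
  calc lpNorm p (fun rs : R × S => bornK α0 B G C (j + 1) η rs)
      ≤ c * lpNorm p (fun rs : R × S => rowNorm rs.1 * columnNorm rs.2) :=
        lpNorm_le_mul_lpNorm_of_norm_le (ENNReal.HolderConjugate.ne_zero p q) hc fun ⟨r, s⟩ =>
          (norm_bornK_apply_le hα0.le B G C j η r s).trans_eq <| by
            rw [Real.norm_of_nonneg (mul_nonneg (lpNorm_nonneg _ _) (lpNorm_nonneg _ _))]
    _ ≤ c * (lpNorm p rowNorm * lpNorm p columnNorm) := by
        gcongr
        exact lpNorm_prod_mul_le rowNorm columnNorm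
    _ = _ := by
        simp only [nuConst, muConst, c]
        ring

theorem forward_born_bound [Nonempty V] [Nonempty R] [Nonempty S]
    (p q : ℝ≥0∞) (hp : 1 ≤ p) (hq : 1 ≤ q) (hpq : 1 / p + 1 / q = 1)
    (α0 : ℝ) (hα0 : 0 < α0) (B : Matrix R V ℂ) (G : Matrix V V ℂ) (C : Matrix V S ℂ)
    (j : ℕ) (η : ℕ → V → ℂ) :
    lpNorm p (fun rs : R × S => bornK α0 B G C (j + 1) η rs) ≤
      nuConst α0 p q B C * muConst α0 q G ^ j *
        ∏ i ∈ Finset.range (j + 1), lpNorm p (η i) :=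
  forward_born_bound_general p q hpq α0 hα0 B G C j η
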